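/- Define φ on words in {1,2} built from blocks 1^a2, 1^{a−1}2, …, 12, 2 by φ(1^k 2) = 1 2^{a−k} for 0 ≤ k ≤ a. Let u, v be positive integers with 0 ≤ av − u ≤ v ≤ u, and let E_{u×v} be the Dyck path of size u × v closest to the diagonal. Then φ(E_{u×v}) = E_{v×(av−u)}. -/

import Mathlib

open List

/-- `E_{u×v}`: the Dyck path of size `u × v` closest to the diagonal
(after `x` east steps its height is `⌊v x / u⌋`). -/
def Eword (u v : ℕ) : List Bool :=
  ((List.range u).map
    (fun x => false :: List.replicate (v * (x + 1) / u - v * x / u) true)).flatten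

/-- Parse a word into blocks `1^k 2`, recording the exponents `k`. -/
def parseAux : List Bool → ℕ → List ℕ
  | [], _ => []
  | false :: w, k => parseAux w (k + 1)
  | true :: w, k => k :: parseAux w 0

/-- The mutation `φ`: applied blockwise, `1^k 2 ↦ 1 2^(a-k)`. -/
def mutate (a : ℕ) (w : List Bool) : List Bool :=
  ((parseAux w 0).map (fun k => false :: List.replicate (a - k) true)).flatten

/-!
Read `E_{u×v}` by its north steps instead of its east steps. Its height after `x` east steps
is `g x = ⌊v x / u⌋`, whose lower adjoint is `c j = ⌈j u / v⌉`; since `v ≤ u` the height rises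
by at most one per east step, so the `(j+1)`-st north step comes right after the `c (j+1)`-th
east step and `E_{u×v} = ∏_{j<v} 1^{c (j+1) - c j} 2`. Thus
`φ(E_{u×v}) = ∏_{j<v} 1 2^{a - c (j+1) + c j}`, and the identity
`⌊(a v - u) j / v⌋ + ⌈j u / v⌉ = a j` turns these exponents into the height increments
of `E_{v×(av-u)}`.
-/

def blockWord (ks : List ℕ) : List Bool :=
  (ks.map fun k => replicate k false ++ [true]).flatten

lemma blockWord_append (ks ls : List ℕ) :
    blockWord (ks ++ ls) = blockWord ks ++ blockWord ls := by
  simp [blockWord]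

lemma parseAux_replicate_false_append (k n : ℕ) (w : List Bool) :
    parseAux (replicate k false ++ w) n = parseAux w (n + k) := by
  induction k generalizing n with
  | zero => rfl
  | succ k ih =>
    rw [replicate_succ, cons_append, parseAux, ih, Nat.add_right_comm, Nat.add_assoc]

lemma parseAux_blockWord (ks : List ℕ) : parseAux (blockWord ks) 0 = ks := by
  induction ks with
  | nil => rfl
  | cons k ks ih =>
    simp only [blockWord, map_cons, flatten_cons, append_assoc, singleton_append,
      parseAux_replicate_false_append, Nat.zero_add, parseAux] at ih ⊢
    rw [ih]

lemma mutate_blockWord (a : ℕ) (ks : List ℕ) :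
    mutate a (blockWord ks) = (ks.map fun k => false :: replicate (a - k) true).flatten := by
  rw [mutate, parseAux_blockWord]

def stepWord (g : ℕ → ℕ) (n : ℕ) : List Bool :=
  ((range n).map fun x => false :: replicate (g (x + 1) - g x) true).flatten

lemma stepWord_succ (g : ℕ → ℕ) (n : ℕ) :
    stepWord g (n + 1) = stepWord g n ++ false :: replicate (g (n + 1) - g n) true := by
  simp [stepWord, range_succ]

section GaloisConnection

variable {c g : ℕ → ℕ} (hgc : GaloisConnection c g) (hg0 : g 0 = 0)
  (hstep : ∀ x, g (x + 1) ≤ g x + 1)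
include hgc hg0 hstep

lemma stepWord_eq_blockWord_append (n : ℕ) :
    stepWord g n = blockWord ((range (g n)).map fun j => c (j + 1) - c j)
      ++ replicate (n - c (g n)) false := by
  induction n with
  | zero => simp [stepWord, blockWord, hg0]
  | succ n ih =>
    have hc : c (g n) ≤ n := hgc.l_u_le n
    rw [stepWord_succ, ih]
    rcases Nat.le_add_one_iff.1 (hstep n) with hle | hrise
    · have hflat : g (n + 1) = g n := le_antisymm hle (hgc.monotone_u n.le_succ)
      rw [hflat, Nat.sub_self, replicate_zero, Nat.sub_add_comm hc, replicate_succ',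
        append_assoc]
    · have hcn : c (g n + 1) = n + 1 := by
        refine le_antisymm (hgc.l_le hrise.ge) (Nat.succ_le_of_lt ?_)
        exact Nat.lt_of_not_le fun h => Nat.not_succ_le_self _ (hgc.le_u h)
      rw [hrise, Nat.add_sub_cancel_left, replicate_one, range_succ, map_append,
        blockWord_append, hcn, Nat.sub_self, replicate_zero, append_nil, append_assoc]
      simp [blockWord, hcn, Nat.sub_add_comm hc, replicate_succ']

lemma stepWord_eq_blockWord {m n : ℕ} (hgn : g n = m) (hcm : c m = n) :
    stepWord g n = blockWord ((range m).map fun j => c (j + 1) - c j) := by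
  rw [stepWord_eq_blockWord_append hgc hg0 hstep, hgn, hcm, Nat.sub_self, replicate_zero,
    append_nil]

end GaloisConnection

section FloorCeil

variable {u v : ℕ}

lemma gc_ceilDiv_div (hu : 0 < u) (hv : 0 < v) :
    GaloisConnection (fun j => j * u ⌈/⌉ v) (fun x => v * x / u) := fun j x => by
  rw [ceilDiv_le_iff_le_mul hv, Nat.le_div_iff_mul_le hu]

lemma div_succ_le_div_add_one (hu : 0 < u) (hvu : v ≤ u) (x : ℕ) :
    v * (x + 1) / u ≤ v * x / u + 1 := by
  rw [← Nat.add_div_right _ hu]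
  exact Nat.div_le_div_right (by rw [Nat.mul_succ]; omega)

lemma Eword_eq_blockWord (hu : 0 < u) (hv : 0 < v) (hvu : v ≤ u) :
    Eword u v = blockWord ((range v).map fun j => (j + 1) * u ⌈/⌉ v - j * u ⌈/⌉ v) :=
  stepWord_eq_blockWord (gc_ceilDiv_div hu hv) (by simp) (div_succ_le_div_add_one hu hvu)
    (Nat.mul_div_cancel v hu) (smul_ceilDiv hv u)

lemma div_add_ceilDiv_eq {a : ℕ} (hv : 0 < v) (hua : u ≤ a * v) (j : ℕ) :
    (a * v - u) * j / v + j * u ⌈/⌉ v = a * j := by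
  set c := j * u ⌈/⌉ v
  have hc_le : c ≤ a * j := (ceilDiv_le_iff_le_mul hv).2 (by nlinarith)
  have hc_lo : j * u ≤ v * c := le_smul_ceilDiv hv
  have hc_hi : v * c < j * u + v := by
    have h : c * v ≤ j * u + v - 1 := Nat.div_mul_le_self _ _
    rw [mul_comm]; omega
  suffices (a * v - u) * j / v = a * j - c by omega
  refine Nat.div_eq_of_lt_le ?_ ?_ <;> zify [hc_le, hua] <;> linarith

end FloorCeil

theorem stmt18_general (a u v : ℕ) (hu : 0 < u) (hv : 0 < v)
    (h1 : u ≤ a * v) (h3 : v ≤ u) :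
    mutate a (Eword u v) = Eword v (a * v - u) := by
  rw [Eword_eq_blockWord hu hv h3, mutate_blockWord, Eword, map_map]
  refine congrArg flatten (map_congr_left fun j _ => ?_)
  have hj := div_add_ceilDiv_eq hv h1 j
  have hj1 := div_add_ceilDiv_eq hv h1 (j + 1)
  have hmono : j * u ⌈/⌉ v ≤ (j + 1) * u ⌈/⌉ v :=
    (gc_ceilDiv_div hu hv).monotone_l j.le_succ
  have hstep : a - ((j + 1) * u ⌈/⌉ v - j * u ⌈/⌉ v)
      = (a * v - u) * (j + 1) / v - (a * v - u) * j / v := by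
    rw [mul_add_one a j] at hj1
    omega
  simp only [Function.comp_apply, hstep]

/-- Mutation of maximal Dyck paths: for `0 ≤ a v - u ≤ v ≤ u`,
`φ(E_{u×v}) = E_{v×(av-u)}`. -/
theorem stmt18 (a u v : ℕ) (ha : 3 ≤ a) (hu : 0 < u) (hv : 0 < v)
    (h1 : u ≤ a * v) (h2 : a * v ≤ v + u) (h3 : v ≤ u) :
    mutate a (Eword u v) = Eword v (a * v - u) :=
  stmt18_general a u v hu hv h1 h3
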